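/- Let (X, Y, ⟨·,·⟩) be a dual pairing and T ⊆ X × Y a nonempty cyclically monotone relation. Fix w = (x₀,y₀) ∈ T and define Rockafellar's antiderivative r(x) := sup{⟨x - xₙ, yₙ⟩ + ∑ᵢ₌₀ⁿ⁻¹ ⟨xᵢ₊₁ - xᵢ, yᵢ⟩ : n ≥ 1, (x₁,y₁),…,(xₙ,yₙ) ∈ T}. Then r(x₀) = 0 and T ⊆ Graph(∂r). -/
import Mathlib


variable {X Y : Type*} [AddCommGroup X] [Module ℝ X] [AddCommGroup Y] [Module ℝ Y]

/-- Rockafellar's antiderivative of `T` based at `(x₀, y₀)`: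
`r(x) = sup{⟨x-xₙ,yₙ⟩ + ∑ᵢ₌₀ⁿ⁻¹⟨xᵢ₊₁-xᵢ,yᵢ⟩ : n ≥ 1, (xᵢ,yᵢ) ∈ T}` with
`(x₀,y₀)` the fixed base pair. -/
noncomputable def rock (b : X →ₗ[ℝ] Y →ₗ[ℝ] ℝ) (T : Set (X × Y))
    (x₀ : X) (y₀ : Y) (x : X) : EReal :=
  sSup {r : EReal | ∃ n : ℕ, 1 ≤ n ∧ ∃ c : ℕ → X × Y, c 0 = (x₀, y₀) ∧
    (∀ i ∈ Finset.Icc 1 n, c i ∈ T) ∧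
    r = ((b (x - (c n).1) (c n).2
        + ∑ i ∈ Finset.range n, b ((c (i + 1)).1 - (c i).1) (c i).2 : ℝ) : EReal)}

/-- For a nonempty cyclically monotone `T` and `(x₀,y₀) ∈ T`, Rockafellar's
antiderivative `r` satisfies `r(x₀) = 0` and `T ⊆ Graph(∂r)`. -/
theorem rockafellar_antiderivative (b : X →ₗ[ℝ] Y →ₗ[ℝ] ℝ) (T : Set (X × Y))
    (hcyc : ∀ n : ℕ, 2 ≤ n → ∀ p : ℕ → X × Y,
      (∀ i ∈ Finset.Icc 1 n, p i ∈ T) → p (n + 1) = p 1 →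
      0 ≤ ∑ i ∈ Finset.Icc 1 n, b ((p i).1 - (p (i + 1)).1) (p i).2)
    (x₀ : X) (y₀ : Y) (hw : (x₀, y₀) ∈ T) :
    rock b T x₀ y₀ x₀ = (0 : EReal) ∧
      ∀ z ∈ T, ∃ s : ℝ, rock b T x₀ y₀ z.1 = (s : EReal) ∧
        ∀ w : X, ((b (w - z.1) z.2 : ℝ) : EReal) + (s : EReal) ≤ rock b T x₀ y₀ w := by
  classical
  set S : X → Set EReal := fun x =>
    {r : EReal | ∃ n : ℕ, 1 ≤ n ∧ ∃ c : ℕ → X × Y, c 0 = (x₀, y₀) ∧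
      (∀ i ∈ Finset.Icc 1 n, c i ∈ T) ∧
      r = ((b (x - (c n).1) (c n).2
          + ∑ i ∈ Finset.range n, b ((c (i + 1)).1 - (c i).1) (c i).2 : ℝ) : EReal)} with hS
  have hrock : ∀ x, rock b T x₀ y₀ x = sSup (S x) := fun x => rfl
  -- anti-symmetric pairing identity
  have hflip : ∀ (u v : X) (yy : Y), b (u - v) yy = -(b (v - u) yy) := by
    intro u v yy
    rw [map_sub, map_sub, LinearMap.sub_apply, LinearMap.sub_apply]
    ring
  -- base element
  have base : ∀ x : X, ((b (x - x₀) y₀ : ℝ) : EReal) ∈ S x := by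
    intro x
    refine ⟨1, le_refl 1, fun _ => (x₀, y₀), rfl, fun i _ => hw, ?_⟩
    simp
  -- step: extending a chain by z ∈ T
  have step : ∀ z ∈ T, ∀ (x : X) (r : EReal), r ∈ S z.1 →
      ((b (x - z.1) z.2 : ℝ) : EReal) + r ∈ S x := by
    rintro z hz x r ⟨n, hn, c, hc0, hcT, hr⟩
    refine ⟨n + 1, by omega, fun i => if i = n + 1 then z else c i,
      by simp [hc0], ?_, ?_⟩
    · intro i hi
      simp only [Finset.mem_Icc] at hi
      by_cases h : i = n + 1
      · simpa [h] using hz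
      · simpa [h] using hcT i (Finset.mem_Icc.2 ⟨hi.1, by omega⟩)
    · subst hr
      rw [← EReal.coe_add]
      congr 1
      rw [Finset.sum_range_succ]
      have h1 : ∀ i ∈ Finset.range n,
          (b ((if i + 1 = n + 1 then z else c (i + 1)).1 -
              (if i = n + 1 then z else c i).1))
            ((if i = n + 1 then z else c i).2)
          = b ((c (i + 1)).1 - (c i).1) (c i).2 := by
        intro i hi
        simp only [Finset.mem_range] at hi
        rw [if_neg (by omega), if_neg (by omega)]
      rw [Finset.sum_congr rfl h1]
      have hx1 : (if n + 1 = n + 1 then z else c (n + 1)) = z := if_pos rfl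
      have hx2 : (if n = n + 1 then z else c n) = c n := if_neg (by omega)
      beta_reduce
      rw [hx1, hx2]
      ring
  -- every element of S x₀ is ≤ 0 (closing the loop)
  have ub0 : ∀ r ∈ S x₀, r ≤ (0 : EReal) := by
    rintro r ⟨n, hn, c, hc0, hcT, hr⟩
    subst hr
    set p : ℕ → X × Y := fun i => if i = n + 2 then c 0 else c (i - 1) with hp
    have hpT : ∀ i ∈ Finset.Icc 1 (n + 1), p i ∈ T := by
      intro i hi
      simp only [Finset.mem_Icc] at hi
      by_cases h1 : i = 1
      · have : p i = c 0 := by rw [hp]; simp only [h1]; rw [if_neg (by omega)]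
        rw [this, hc0]; exact hw
      · have : p i = c (i - 1) := if_neg (by omega)
        rw [this]; exact hcT (i - 1) (Finset.mem_Icc.2 ⟨by omega, by omega⟩)
    have hclose : p (n + 1 + 1) = p 1 := by
      show (if n + 1 + 1 = n + 2 then c 0 else c (n + 1 + 1 - 1))
          = (if 1 = n + 2 then c 0 else c (1 - 1))
      rw [if_pos (by omega), if_neg (by omega)]
    have h0 := hcyc (n + 1) (by omega) p hpT hclose
    have hsum : ∑ i ∈ Finset.Icc 1 (n + 1), b ((p i).1 - (p (i + 1)).1) (p i).2
        = -(b (x₀ - (c n).1) (c n).2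
            + ∑ i ∈ Finset.range n, b ((c (i + 1)).1 - (c i).1) (c i).2) := by
      rw [Finset.sum_Icc_succ_top (by omega : 1 ≤ n + 1)]
      have e1 : ∑ i ∈ Finset.Icc 1 n, b ((p i).1 - (p (i + 1)).1) (p i).2
          = ∑ i ∈ Finset.range n, -(b ((c (i + 1)).1 - (c i).1) (c i).2) := by
        rw [← Finset.Ico_add_one_right_eq_Icc, Finset.sum_Ico_eq_sum_range]
        refine Finset.sum_congr rfl ?_
        intro i hi
        simp only [Finset.mem_range] at hi
        have e2 : p (1 + i) = c i := by
          show (if 1 + i = n + 2 then c 0 else c (1 + i - 1)) = c i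
          rw [if_neg (by omega)]; congr 1; omega
        have e3 : p (1 + i + 1) = c (i + 1) := by
          show (if 1 + i + 1 = n + 2 then c 0 else c (1 + i + 1 - 1)) = c (i + 1)
          rw [if_neg (by omega)]; congr 1; omega
        rw [e2, e3, hflip]
      have e4 : p (n + 1) = c n := by
        show (if n + 1 = n + 2 then c 0 else c (n + 1 - 1)) = c n
        rw [if_neg (by omega)]; congr 1
      have e5 : p (n + 1 + 1) = (x₀, y₀) := by
        show (if n + 1 + 1 = n + 2 then c 0 else c (n + 1 + 1 - 1)) = (x₀, y₀)
        rw [if_pos (by omega), hc0]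
      have eA : b ((p (n + 1)).1 - (p (n + 1 + 1)).1) (p (n + 1)).2
          = -(b (x₀ - (c n).1) (c n).2) := by
        rw [e4, e5, hflip]
      rw [e1, eA, Finset.sum_neg_distrib]
      ring
    rw [hsum] at h0
    have hV : b (x₀ - (c n).1) (c n).2
        + ∑ i ∈ Finset.range n, b ((c (i + 1)).1 - (c i).1) (c i).2 ≤ 0 := by linarith
    exact_mod_cast EReal.coe_nonpos.2 hV
  -- key inequality
  have keyineq : ∀ z ∈ T, ∀ x : X,
      ((b (x - z.1) z.2 : ℝ) : EReal) + sSup (S z.1) ≤ sSup (S x) := by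
    intro z hz x
    set a : ℝ := b (x - z.1) z.2 with ha
    rw [add_comm, ← EReal.le_sub_iff_add_le (Or.inl (EReal.coe_ne_bot a))
      (Or.inl (EReal.coe_ne_top a))]
    refine sSup_le fun r hr => ?_
    rw [EReal.le_sub_iff_add_le (Or.inl (EReal.coe_ne_bot a))
      (Or.inl (EReal.coe_ne_top a)), add_comm]
    exact le_sSup (step z hz x r hr)
  have hx0 : rock b T x₀ y₀ x₀ = (0 : EReal) := by
    rw [hrock]
    refine le_antisymm (sSup_le ub0) ?_
    have h00 : ((b (x₀ - x₀) y₀ : ℝ) : EReal) = (0 : EReal) := by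
      norm_num
    calc (0 : EReal) = ((b (x₀ - x₀) y₀ : ℝ) : EReal) := h00.symm
      _ ≤ sSup (S x₀) := le_sSup (base x₀)
  refine ⟨hx0, ?_⟩
  intro z hz
  have hbot : ((b (z.1 - x₀) y₀ : ℝ) : EReal) ≤ sSup (S z.1) := le_sSup (base z.1)
  have hnb : sSup (S z.1) ≠ ⊥ := by
    intro h
    rw [h] at hbot
    exact (EReal.coe_ne_bot _) (le_bot_iff.1 hbot)
  have hnt : sSup (S z.1) ≠ ⊤ := by
    intro h
    have h2 := keyineq z hz x₀
    rw [h] at h2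
    rw [hrock x₀] at hx0
    rw [hx0, EReal.coe_add_top] at h2
    exact (lt_irrefl _ ((EReal.zero_lt_top).trans_le h2)).elim
  refine ⟨(sSup (S z.1)).toReal, ?_, ?_⟩
  · rw [hrock]
    exact (EReal.coe_toReal hnt hnb).symm
  · intro w
    have h2 := keyineq z hz w
    rw [EReal.coe_toReal hnt hnb, hrock]
    exact h2
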